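/- arXiv:2504.14199 — 2 statements merged into one kernel-verified Lean document; each statement's English description precedes it below -/
import Mathlib

section
/- In the framed algebra f̃ (type depending on I), for i ∈ I and λ dominant, the element θ_λ = ∏_{j∈I} θ_{j'}^{(⟨j,λ⟩)} satisfies: θ_i^{⟨i,λ⟩+1} θ_{j'}^{(⟨j,λ⟩)} = θ_{j'}^{(⟨j,λ⟩)} θ_i^{⟨i,λ⟩+1} for j ≠ i, while θ_i^{(⟨i,λ⟩+1)} θ_{i'}^{(⟨i,λ⟩)} = ∑_{n=0}^{⟨i,λ⟩} (v^{-(⟨i,λ⟩+1-n)(⟨i,λ⟩-n)}/[n]!) θ_{i'}^{(⟨i,λ⟩-n)} (θ_i θ_{i'} - v^{-1} θ_{i'} θ_i)^n θ_i^{(⟨i,λ⟩+1-n)}. Consequently, (∑_{i∈I} f θ_i^{⟨i,λ⟩+1}) θ_λ ⊆ f θ_λ f ∩ ∑_{i∈I} f̃ θ_i. -/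
/-!
Write a = θ_i, b = θ_{i'} and E = ab - v⁻¹ba. Because i·i' = -1, the two Serre relations
amount to aE = vEa and Eb = vbE, and these give ab^{m+1} = [m+1] b^m E + v^{-(m+1)} b^{m+1} a.
Moving a^p to the right across b^N therefore gives a combination of the monomials
b^{N-n} E^n a^{p-n}. Their coefficients obey a q-Pascal recursion, with solution
[p]! [N]! v^{-(p-n)(N-n)} / ([n]! [p-n]! [N-n]!) for n ≤ N, and they vanish for n > N.
For p = N + 1, every surviving monomial ends in a positive power of a. Since θ_i commutes with
the other factors θ_{j'}^{(⟨j,λ⟩)} of θ_λ, this puts θ_i^{⟨i,λ⟩+1} θ_λ in f̃ θ_i. Membership in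
f θ_λ f is immediate.
-/

open scoped BigOperators

noncomputable section

abbrev K : Type := RatFunc ℚ

noncomputable def v : K := RatFunc.X

noncomputable def qint (n : ℤ) : K := (v ^ n - v ^ (-n)) / (v - v⁻¹)

noncomputable def qfact (m : ℕ) : K := ∏ k ∈ Finset.range m, qint ((k : ℤ) + 1)

noncomputable def dp {A : Type*} [Ring A] [Algebra K A] (a : A) (n : ℕ) : A :=
  (qfact n)⁻¹ • a ^ n

lemma v_ne_zero : v ≠ 0 := RatFunc.X_ne_zero

lemma v_pow_ne_one {k : ℕ} (hk : k ≠ 0) : v ^ k ≠ 1 := by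
  intro h
  rw [v, ← RatFunc.algebraMap_X, ← map_pow, ← map_one (algebraMap (Polynomial ℚ) K)] at h
  simpa [hk] using congrArg Polynomial.natDegree (RatFunc.algebraMap_injective ℚ h)

lemma v_sub_inv_ne_zero : v - v⁻¹ ≠ 0 := by
  intro h
  apply v_pow_ne_one two_ne_zero
  field_simp [v_ne_zero] at h
  linear_combination h

lemma qint_zero : qint 0 = 0 := by simp [qint]

lemma qint_one : qint 1 = 1 := by
  simp [qint, div_self v_sub_inv_ne_zero]

lemma qint_add (m n : ℤ) : qint (m + n) = v ^ n * qint m + v ^ (-m) * qint n := by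
  simp only [qint, neg_add, zpow_add₀ v_ne_zero]
  ring

lemma qint_two : qint 2 = v + v⁻¹ := by
  simpa [qint_one, add_comm] using qint_add 1 1

lemma qint_natCast_ne_zero {n : ℕ} (hn : n ≠ 0) : qint n ≠ 0 := by
  refine div_ne_zero (fun h => v_pow_ne_one (k := n + n) (by omega) ?_) v_sub_inv_ne_zero
  rw [sub_eq_zero] at h
  calc v ^ (n + n) = v ^ (-(n : ℤ)) * v ^ (n : ℤ) := by rw [← h, zpow_natCast, pow_add]
    _ = 1 := by rw [← zpow_add₀ v_ne_zero, neg_add_cancel, zpow_zero]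

lemma qfact_zero : qfact 0 = 1 := by simp [qfact]

lemma qfact_succ (n : ℕ) : qfact (n + 1) = qfact n * qint ((n : ℤ) + 1) :=
  Finset.prod_range_succ _ _

lemma qfact_two : qfact 2 = qint 2 := by
  simp [qfact, Finset.prod_range_succ, qint_one]

lemma qfact_ne_zero (n : ℕ) : qfact n ≠ 0 := by
  induction n with
  | zero => simp [qfact_zero]
  | succ k ih => exact qfact_succ k ▸ mul_ne_zero ih (mod_cast qint_natCast_ne_zero k.succ_ne_zero)

lemma qfact_smul_dp {A : Type*} [Ring A] [Algebra K A] (a : A) (n : ℕ) :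
    qfact n • dp a n = a ^ n := by
  rw [dp, smul_smul, mul_inv_cancel₀ (qfact_ne_zero n), one_smul]

lemma dp_succ_eq_mul {A : Type*} [Ring A] [Algebra K A] (a : A) (n : ℕ) :
    dp a (n + 1) = ((qfact (n + 1))⁻¹ • a ^ n) * a := by
  rw [dp, pow_succ, smul_mul_assoc]

lemma Commute.dp_right {A : Type*} [Ring A] [Algebra K A] {a b : A} (h : Commute a b) (n : ℕ) :
    Commute a (dp b n) :=
  (h.pow_right n).smul_right _

def qbinom : ℕ → ℕ → K
  | _, 0 => 1
  | 0, _ + 1 => 0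
  | p + 1, n + 1 => v ^ (-((p : ℤ) - n)) * qbinom p n + v ^ ((n : ℤ) + 1) * qbinom p (n + 1)

lemma qbinom_zero_right (p : ℕ) : qbinom p 0 = 1 := by cases p <;> rfl

lemma qbinom_succ_succ (p n : ℕ) :
    qbinom (p + 1) (n + 1)
      = v ^ (-((p : ℤ) - n)) * qbinom p n + v ^ ((n : ℤ) + 1) * qbinom p (n + 1) :=
  rfl

lemma qbinom_eq_zero_of_lt {p n : ℕ} (h : p < n) : qbinom p n = 0 := by
  induction p generalizing n with
  | zero => obtain ⟨k, rfl⟩ := Nat.exists_eq_add_one_of_ne_zero h.ne'; rfl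
  | succ p ih =>
    obtain ⟨k, rfl⟩ := Nat.exists_eq_add_one_of_ne_zero (by omega : n ≠ 0)
    rw [qbinom_succ_succ, ih (by omega), ih (by omega), mul_zero, mul_zero, add_zero]

lemma qfact_sub_eq_mul {p n : ℕ} (h : n < p) :
    qfact (p - n) = qfact (p - (n + 1)) * qint ((p : ℤ) - n) := by
  rw [show p - n = p - (n + 1) + 1 by omega, qfact_succ, Nat.cast_sub (by omega : n + 1 ≤ p)]
  push_cast
  ring_nf

lemma qbinom_mul_qfact {p n : ℕ} (h : n ≤ p) :
    qbinom p n * (qfact n * qfact (p - n)) = qfact p := by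
  induction p generalizing n with
  | zero =>
    obtain rfl : n = 0 := by omega
    simp [qbinom_zero_right, qfact_zero]
  | succ p ih =>
    cases n with
    | zero => simp [qbinom_zero_right, qfact_zero]
    | succ n =>
      have hn : n ≤ p := by omega
      have h₁ : qbinom p n * (qfact (n + 1) * qfact (p - n)) = qint ((n : ℤ) + 1) * qfact p := by
        rw [qfact_succ, ← ih hn]; ring
      have h₂ : qbinom p (n + 1) * (qfact (n + 1) * qfact (p - n))
          = qint ((p : ℤ) - n) * qfact p := by
        rcases hn.lt_or_eq with hlt | rfl
        · rw [qfact_sub_eq_mul hlt, ← ih hlt]; ring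
        · simp [qbinom_eq_zero_of_lt, qint_zero]
      calc qbinom (p + 1) (n + 1) * (qfact (n + 1) * qfact (p + 1 - (n + 1)))
          = v ^ (-((p : ℤ) - n)) * (qbinom p n * (qfact (n + 1) * qfact (p - n)))
            + v ^ ((n : ℤ) + 1) * (qbinom p (n + 1) * (qfact (n + 1) * qfact (p - n))) := by
            rw [qbinom_succ_succ, Nat.add_sub_add_right]; ring
        _ = (v ^ ((n : ℤ) + 1) * qint ((p : ℤ) - n) + v ^ (-((p : ℤ) - n)) * qint ((n : ℤ) + 1))
            * qfact p := by rw [h₁, h₂]; ring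
        _ = qfact (p + 1) := by rw [← qint_add, qfact_succ]; ring_nf

def qdescFactorial (N n : ℕ) : K := ∏ k ∈ Finset.range n, qint ((N : ℤ) - k)

lemma qdescFactorial_zero (N : ℕ) : qdescFactorial N 0 = 1 := Finset.prod_range_zero _

lemma qdescFactorial_succ (N n : ℕ) :
    qdescFactorial N (n + 1) = qdescFactorial N n * qint ((N : ℤ) - n) :=
  Finset.prod_range_succ _ _

lemma qdescFactorial_succ_self (N : ℕ) : qdescFactorial N (N + 1) = 0 := by
  rw [qdescFactorial_succ, sub_self, qint_zero, mul_zero]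

lemma qdescFactorial_mul_qfact {N n : ℕ} (h : n ≤ N) :
    qdescFactorial N n * qfact (N - n) = qfact N := by
  induction n with
  | zero => simp [qdescFactorial_zero]
  | succ n ih =>
    rw [qdescFactorial_succ, ← ih (by omega), qfact_sub_eq_mul (p := N) (n := n) (by omega)]
    ring

def expansionCoeff (N p n : ℕ) : K :=
  qbinom p n * qdescFactorial N n * v ^ (-(((p : ℤ) - n) * ((N : ℤ) - n)))

lemma expansionCoeff_zero_zero (N : ℕ) : expansionCoeff N 0 0 = 1 := by
  simp [expansionCoeff, qbinom_zero_right, qdescFactorial_zero]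

lemma expansionCoeff_succ_zero (N p : ℕ) :
    expansionCoeff N (p + 1) 0 = expansionCoeff N p 0 * v ^ (-(N : ℤ)) := by
  simp only [expansionCoeff, qbinom_zero_right, mul_assoc, ← zpow_add₀ v_ne_zero]
  push_cast
  ring_nf

lemma expansionCoeff_succ_succ (N p n : ℕ) :
    expansionCoeff N (p + 1) (n + 1) = expansionCoeff N p n * qint ((N : ℤ) - n)
      + expansionCoeff N p (n + 1) * v ^ (2 * ((n + 1 : ℕ) : ℤ) - N) := by
  have e₁ : v ^ (-((p : ℤ) - n))
        * v ^ (-((((p + 1 : ℕ) : ℤ) - (n + 1 : ℕ)) * ((N : ℤ) - (n + 1 : ℕ))))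
      = v ^ (-(((p : ℤ) - n) * ((N : ℤ) - n))) := by
    rw [← zpow_add₀ v_ne_zero]; push_cast; ring_nf
  have e₂ : v ^ ((n : ℤ) + 1) * v ^ (-((((p + 1 : ℕ) : ℤ) - (n + 1 : ℕ)) * ((N : ℤ) - (n + 1 : ℕ))))
      = v ^ (-(((p : ℤ) - (n + 1 : ℕ)) * ((N : ℤ) - (n + 1 : ℕ))))
        * v ^ (2 * ((n + 1 : ℕ) : ℤ) - N) := by
    rw [← zpow_add₀ v_ne_zero, ← zpow_add₀ v_ne_zero]; push_cast; ring_nf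
  simp only [expansionCoeff, qbinom_succ_succ, qdescFactorial_succ]
  linear_combination (qbinom p n * qdescFactorial N n * qint ((N : ℤ) - n)) * e₁
    + (qbinom p (n + 1) * qdescFactorial N n * qint ((N : ℤ) - n)) * e₂

lemma expansionCoeff_of_lt {N p n : ℕ} (h : p < n) : expansionCoeff N p n = 0 := by
  simp [expansionCoeff, qbinom_eq_zero_of_lt h]

lemma expansionCoeff_succ_self (N : ℕ) : expansionCoeff N (N + 1) (N + 1) = 0 := by
  simp [expansionCoeff, qdescFactorial_succ_self]

lemma expansionCoeff_mul_qfact {N p n : ℕ} (hp : n ≤ p) (hN : n ≤ N) :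
    expansionCoeff N p n * (qfact n * qfact (p - n) * qfact (N - n))
      = qfact p * qfact N * v ^ (-(((p - n : ℕ) : ℤ) * ((N - n : ℕ) : ℤ))) := by
  rw [← qbinom_mul_qfact hp, ← qdescFactorial_mul_qfact hN, expansionCoeff,
    Nat.cast_sub hp, Nat.cast_sub hN]
  ring

lemma mul_pow_eq_smul_pow_mul {R A : Type*} [CommSemiring R] [Semiring A] [Algebra R A]
    {a e : A} {c : R} (h : a * e = c • (e * a)) (n : ℕ) : a * e ^ n = c ^ n • (e ^ n * a) := by
  induction n with
  | zero => simp
  | succ n ih =>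
    rw [pow_succ, ← mul_assoc, ih, smul_mul_assoc, mul_assoc, h, mul_smul_comm, smul_smul,
      ← mul_assoc, ← pow_succ, pow_succ]

lemma Finset.sum_range_add_eq_sum_range_add_succ {M : Type*} [AddCommMonoid M] (f g : ℕ → M)
    (p : ℕ) (hg : g (p + 1) = 0) :
    ∑ n ∈ range (p + 1), (f n + g n) = ∑ n ∈ range (p + 1), (f n + g (n + 1)) + g 0 := by
  rw [sum_add_distrib, sum_add_distrib, add_assoc, ← sum_range_succ', sum_range_succ _ (p + 1), hg,
    add_zero]

section SerreRelations

variable {A : Type*} [Ring A] [Algebra K A]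

def qcomm (a b : A) : A := a * b - v⁻¹ • (b * a)

lemma qfact_two_smul_serre (a b : A) :
    qfact 2 • (dp a 2 * b - a * b * a + b * dp a 2)
      = a * (a * b) - (v + v⁻¹) • (a * (b * a)) + b * (a * a) := by
  simp only [dp, smul_add, smul_sub, smul_mul_assoc, mul_smul_comm, smul_smul,
    mul_inv_cancel₀ (qfact_ne_zero 2), one_smul, pow_two, mul_assoc]
  rw [qfact_two, qint_two]

variable {a b : A}

lemma mul_qcomm_of_serre (h : dp a 2 * b - a * b * a + b * dp a 2 = 0) :
    a * qcomm a b = v • (qcomm a b * a) := by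
  have h' := qfact_two_smul_serre a b
  rw [h, smul_zero] at h'
  simp only [qcomm, mul_sub, sub_mul, mul_smul_comm, smul_mul_assoc, smul_sub, smul_smul,
    mul_inv_cancel₀ v_ne_zero, one_smul, mul_assoc]
  rw [← sub_eq_zero, h', add_smul]
  abel

lemma qcomm_mul_of_serre (h : dp b 2 * a - b * a * b + a * dp b 2 = 0) :
    qcomm a b * b = v • (b * qcomm a b) := by
  have h' := qfact_two_smul_serre b a
  rw [h, smul_zero] at h'
  simp only [qcomm, mul_sub, sub_mul, mul_smul_comm, smul_mul_assoc, smul_sub, smul_smul,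
    mul_inv_cancel₀ v_ne_zero, one_smul, mul_assoc]
  rw [← sub_eq_zero, h', add_smul]
  abel

lemma mul_pow_succ_of_qcomm_mul (hb : qcomm a b * b = v • (b * qcomm a b)) (M : ℕ) :
    a * b ^ (M + 1) = qint ((M : ℤ) + 1) • (b ^ M * qcomm a b)
      + v ^ (-((M : ℤ) + 1)) • (b ^ (M + 1) * a) := by
  have hab : a * b = qcomm a b + v⁻¹ • (b * a) := by rw [qcomm, sub_add_cancel]
  induction M with
  | zero => simp [hab, qint_one]
  | succ M ih =>
    have hq : qint ((M : ℤ) + 1 + 1) = v * qint ((M : ℤ) + 1) + v ^ (-((M : ℤ) + 1)) := by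
      simpa [qint_one] using qint_add ((M : ℤ) + 1) 1
    have hv : v ^ (-((M : ℤ) + 1 + 1)) = v ^ (-((M : ℤ) + 1)) * v⁻¹ := by
      rw [neg_add, zpow_add₀ v_ne_zero, zpow_neg_one]
    rw [pow_succ b (M + 1), ← mul_assoc, ih, add_mul, smul_mul_assoc, smul_mul_assoc, mul_assoc,
      hb, mul_assoc, hab]
    push_cast
    rw [hq, hv]
    simp only [mul_smul_comm, mul_add, ← mul_assoc, ← pow_succ]
    rw [smul_add, smul_smul, smul_smul, add_smul, mul_comm (qint _) v]
    abel

lemma mul_pow_of_qcomm_mul (hb : qcomm a b * b = v • (b * qcomm a b)) (m : ℕ) :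
    a * b ^ m = qint m • (b ^ (m - 1) * qcomm a b) + v ^ (-(m : ℤ)) • (b ^ m * a) := by
  cases m with
  | zero => simp [qint_zero]
  | succ m => simpa using mul_pow_succ_of_qcomm_mul hb m

lemma mul_pow_mul_qcomm_pow_mul_pow (ha : a * qcomm a b = v • (qcomm a b * a))
    (hb : qcomm a b * b = v • (b * qcomm a b)) {N n : ℕ} (hn : n ≤ N) (k : ℕ) :
    a * (b ^ (N - n) * qcomm a b ^ n * a ^ k)
      = qint ((N : ℤ) - n) • (b ^ (N - (n + 1)) * qcomm a b ^ (n + 1) * a ^ k)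
        + v ^ (2 * (n : ℤ) - N) • (b ^ (N - n) * qcomm a b ^ n * a ^ (k + 1)) := by
  have hv : v ^ (-((N : ℤ) - n)) * v ^ n = v ^ (2 * (n : ℤ) - N) := by
    rw [← zpow_natCast, ← zpow_add₀ v_ne_zero]; ring_nf
  calc a * (b ^ (N - n) * qcomm a b ^ n * a ^ k)
      = (a * b ^ (N - n)) * qcomm a b ^ n * a ^ k := by simp only [mul_assoc]
    _ = qint ((N : ℤ) - n) • (b ^ (N - (n + 1)) * (qcomm a b * qcomm a b ^ n) * a ^ k)
        + v ^ (-((N : ℤ) - n)) • (b ^ (N - n) * (a * qcomm a b ^ n) * a ^ k) := by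
      rw [mul_pow_of_qcomm_mul hb, Nat.sub_sub, Nat.cast_sub hn]
      simp only [add_mul, smul_mul_assoc, mul_assoc]
    _ = _ := by
      rw [mul_pow_eq_smul_pow_mul ha, ← pow_succ', ← hv, ← smul_smul, pow_succ' a k]
      simp only [mul_smul_comm, smul_mul_assoc, mul_assoc]

lemma pow_mul_pow_eq_sum (ha : a * qcomm a b = v • (qcomm a b * a))
    (hb : qcomm a b * b = v • (b * qcomm a b)) {N p : ℕ} (hp : p ≤ N + 1) :
    a ^ p * b ^ N = ∑ n ∈ Finset.range (p + 1),
      expansionCoeff N p n • (b ^ (N - n) * qcomm a b ^ n * a ^ (p - n)) := by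
  induction p with
  | zero => simp [expansionCoeff_zero_zero]
  | succ p ih =>
    set m : ℕ → ℕ → A := fun n k => b ^ (N - n) * qcomm a b ^ n * a ^ k
    have hstep : a ^ (p + 1) * b ^ N = ∑ n ∈ Finset.range (p + 1),
        ((expansionCoeff N p n * qint ((N : ℤ) - n)) • m (n + 1) (p - n)
          + (expansionCoeff N p n * v ^ (2 * (n : ℤ) - N)) • m n (p + 1 - n)) := by
      rw [pow_succ', mul_assoc, ih (by omega), Finset.mul_sum]
      refine Finset.sum_congr rfl fun n hn => ?_
      have hnp : n ≤ p := Nat.lt_succ_iff.mp (Finset.mem_range.mp hn)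
      rw [mul_smul_comm, mul_pow_mul_qcomm_pow_mul_pow ha hb (by omega), smul_add, smul_smul,
        smul_smul, Nat.sub_add_comm hnp]
    rw [hstep, Finset.sum_range_add_eq_sum_range_add_succ _ _ _ (by simp [expansionCoeff_of_lt]),
      Finset.sum_range_succ' _ (p + 1)]
    simp [m, expansionCoeff_succ_succ, expansionCoeff_succ_zero, add_smul]

lemma dp_mul_dp_eq_sum (ha : a * qcomm a b = v • (qcomm a b * a))
    (hb : qcomm a b * b = v • (b * qcomm a b)) (N : ℕ) :
    dp a (N + 1) * dp b N = ∑ n ∈ Finset.range (N + 1),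
      (v ^ (-(((N + 1 - n : ℕ) : ℤ) * ((N - n : ℕ) : ℤ))) * (qfact n)⁻¹) •
        (dp b (N - n) * qcomm a b ^ n * dp a (N + 1 - n)) := by
  rw [dp, dp, smul_mul_assoc, mul_smul_comm, smul_smul, pow_mul_pow_eq_sum ha hb le_rfl,
    Finset.sum_range_succ, expansionCoeff_succ_self, zero_smul, add_zero, Finset.smul_sum]
  refine Finset.sum_congr rfl fun n hn => ?_
  have hnN : n ≤ N := Nat.lt_succ_iff.mp (Finset.mem_range.mp hn)
  have hc := expansionCoeff_mul_qfact (N := N) (p := N + 1) (n := n) (by omega) hnN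
  simp only [dp, smul_mul_assoc, mul_smul_comm, smul_smul]
  congr 1
  field_simp [qfact_ne_zero]
  linear_combination hc

lemma exists_pow_succ_mul_dp_eq_mul (ha : a * qcomm a b = v • (qcomm a b * a))
    (hb : qcomm a b * b = v • (b * qcomm a b)) (N : ℕ) : ∃ w, a ^ (N + 1) * dp b N = w * a := by
  suffices a ^ (N + 1) * dp b N ∈ LinearMap.range (LinearMap.mulRight K a) by
    simpa [eq_comm] using this
  rw [← qfact_smul_dp a, smul_mul_assoc, dp_mul_dp_eq_sum ha hb]
  refine Submodule.smul_mem _ _ (Submodule.sum_mem _ fun n hn => Submodule.smul_mem _ _ ?_)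
  rw [Nat.sub_add_comm (Nat.lt_succ_iff.mp (Finset.mem_range.mp hn)), dp_succ_eq_mul]
  exact ⟨_, (LinearMap.mulRight_apply _ _ _).trans (mul_assoc _ _ a)⟩

end SerreRelations

lemma exists_commute_eq_mul_of_eq_list_prod {I M : Type*} [Fintype I] [Monoid M] (g : I → M)
    {t : M} (ht : ∀ L : List I, L.Nodup → (∀ i, i ∈ L) → t = (L.map g).prod) {a : M} (i : I)
    (ha : ∀ j, j ≠ i → Commute a (g j)) : ∃ T, Commute a T ∧ t = T * g i := by
  classical
  set L := (Finset.univ.erase i).toList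
  refine ⟨(L.map g).prod, Commute.list_prod_right _ _ ?_, ?_⟩
  · simp only [List.mem_map, Finset.mem_toList, L]
    rintro _ ⟨j, hj, rfl⟩
    exact ha j (Finset.ne_of_mem_erase hj)
  · have hL : (L ++ [i]).Nodup :=
      (Finset.nodup_toList _).append (List.nodup_singleton i) (by simp)
    rw [ht _ hL (fun j => by by_cases j = i <;> simp_all [L]), List.map_append, List.prod_append]
    simp

lemma Submodule.mul_mem_of_mem_span {R A : Type*} [CommSemiring R] [Semiring A] [Algebra R A]
    {s : Set A} {t : A} {M : Submodule R A} (h : ∀ z ∈ s, z * t ∈ M) {x : A}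
    (hx : x ∈ Submodule.span R s) : x * t ∈ M :=
  (Submodule.span_le (p := M.comap (LinearMap.mulRight R t))).mpr h hx

-- `θ (Sum.inl i)` is θ_i and `θ (Sum.inr i)` is θ_{i'}; `tl` is θ_λ, given by `htl` as the product
-- of its factors in any order; f is the subalgebra generated by the θ_i.
theorem stmt8_general {I A : Type*} [Fintype I] [Ring A] [Algebra K A]
    (θ : I ⊕ I → A) (lamc : I → ℕ)
    (hSerre0 : ∀ i j : I, i ≠ j →
      θ (Sum.inl i) * θ (Sum.inr j) = θ (Sum.inr j) * θ (Sum.inl i))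
    (hSerreA2 : ∀ i : I,
      dp (θ (Sum.inl i)) 2 * θ (Sum.inr i)
          - θ (Sum.inl i) * θ (Sum.inr i) * θ (Sum.inl i)
          + θ (Sum.inr i) * dp (θ (Sum.inl i)) 2 = 0 ∧
      dp (θ (Sum.inr i)) 2 * θ (Sum.inl i)
          - θ (Sum.inr i) * θ (Sum.inl i) * θ (Sum.inr i)
          + θ (Sum.inl i) * dp (θ (Sum.inr i)) 2 = 0)
    (tl : A)
    (htl : ∀ L : List I, L.Nodup → (∀ i, i ∈ L) →
      tl = (L.map fun i => dp (θ (Sum.inr i)) (lamc i)).prod) :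
    (∀ i j : I, i ≠ j →
      θ (Sum.inl i) ^ (lamc i + 1) * dp (θ (Sum.inr j)) (lamc j)
        = dp (θ (Sum.inr j)) (lamc j) * θ (Sum.inl i) ^ (lamc i + 1)) ∧
    (∀ i : I,
      dp (θ (Sum.inl i)) (lamc i + 1) * dp (θ (Sum.inr i)) (lamc i)
        = ∑ n ∈ Finset.range (lamc i + 1),
            (v ^ (-(((lamc i + 1 - n : ℕ) : ℤ) * ((lamc i - n : ℕ) : ℤ))) * (qfact n)⁻¹) •
              (dp (θ (Sum.inr i)) (lamc i - n) *
                (θ (Sum.inl i) * θ (Sum.inr i) - v⁻¹ • (θ (Sum.inr i) * θ (Sum.inl i))) ^ n *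
                dp (θ (Sum.inl i)) (lamc i + 1 - n))) ∧
    (∀ x ∈ Submodule.span K {z : A |
        ∃ p ∈ Algebra.adjoin K (Set.range fun i : I => θ (Sum.inl i)),
          ∃ i : I, z = p * θ (Sum.inl i) ^ (lamc i + 1)},
      x * tl ∈
        (Submodule.span K {z : A |
            ∃ p ∈ Algebra.adjoin K (Set.range fun i : I => θ (Sum.inl i)),
              ∃ q ∈ Algebra.adjoin K (Set.range fun i : I => θ (Sum.inl i)),
                z = p * tl * q}) ⊓
        (Submodule.span K {z : A | ∃ w : A, ∃ i : I, z = w * θ (Sum.inl i)})) := by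
  have ha i := mul_qcomm_of_serre (hSerreA2 i).1
  have hb i := qcomm_mul_of_serre (hSerreA2 i).2
  refine ⟨fun i j hij => ((Commute.dp_right (hSerre0 i j hij) _).pow_left _).eq,
    fun i => dp_mul_dp_eq_sum (ha i) (hb i) (lamc i), fun x hx => ?_⟩
  refine Submodule.mul_mem_of_mem_span ?_ hx
  rintro _ ⟨p, hp, i, rfl⟩
  obtain ⟨T, hT, rfl⟩ := exists_commute_eq_mul_of_eq_list_prod _ htl i
    fun j hj => Commute.dp_right (hSerre0 i j hj.symm) _
  obtain ⟨w, hw⟩ := exists_pow_succ_mul_dp_eq_mul (ha i) (hb i) (lamc i)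
  have hθ := Algebra.subset_adjoin (R := K) (Set.mem_range_self (f := fun i => θ (Sum.inl i)) i)
  refine ⟨Submodule.subset_span ⟨_, mul_mem hp (pow_mem hθ _), 1, one_mem _, (mul_one _).symm⟩,
    Submodule.subset_span ⟨p * T * w, i, ?_⟩⟩
  rw [← mul_assoc, mul_assoc p, (hT.pow_left _).eq, mul_assoc,
    mul_assoc, hw, mul_assoc, mul_assoc]

theorem stmt8 {I A : Type*} [Fintype I] [DecidableEq I] [Ring A] [Algebra K A]
    (θ : I ⊕ I → A) (lamc : I → ℕ)
    (hSerre0 : ∀ i j : I, i ≠ j →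
      θ (Sum.inl i) * θ (Sum.inr j) = θ (Sum.inr j) * θ (Sum.inl i))
    (hSerreA2 : ∀ i : I,
      dp (θ (Sum.inl i)) 2 * θ (Sum.inr i)
          - θ (Sum.inl i) * θ (Sum.inr i) * θ (Sum.inl i)
          + θ (Sum.inr i) * dp (θ (Sum.inl i)) 2 = 0 ∧
      dp (θ (Sum.inr i)) 2 * θ (Sum.inl i)
          - θ (Sum.inr i) * θ (Sum.inl i) * θ (Sum.inr i)
          + θ (Sum.inl i) * dp (θ (Sum.inr i)) 2 = 0)
    (hcommI' : ∀ i j : I, θ (Sum.inr i) * θ (Sum.inr j) = θ (Sum.inr j) * θ (Sum.inr i))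
    (tl : A)
    (htl : ∀ L : List I, L.Nodup → (∀ i, i ∈ L) →
      tl = (L.map fun i => dp (θ (Sum.inr i)) (lamc i)).prod) :
    (∀ i j : I, i ≠ j →
      θ (Sum.inl i) ^ (lamc i + 1) * dp (θ (Sum.inr j)) (lamc j)
        = dp (θ (Sum.inr j)) (lamc j) * θ (Sum.inl i) ^ (lamc i + 1)) ∧
    (∀ i : I,
      dp (θ (Sum.inl i)) (lamc i + 1) * dp (θ (Sum.inr i)) (lamc i)
        = ∑ n ∈ Finset.range (lamc i + 1),
            (v ^ (-(((lamc i + 1 - n : ℕ) : ℤ) * ((lamc i - n : ℕ) : ℤ))) * (qfact n)⁻¹) •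
              (dp (θ (Sum.inr i)) (lamc i - n) *
                (θ (Sum.inl i) * θ (Sum.inr i) - v⁻¹ • (θ (Sum.inr i) * θ (Sum.inl i))) ^ n *
                dp (θ (Sum.inl i)) (lamc i + 1 - n))) ∧
    (∀ x ∈ Submodule.span K {z : A |
        ∃ p ∈ Algebra.adjoin K (Set.range fun i : I => θ (Sum.inl i)),
          ∃ i : I, z = p * θ (Sum.inl i) ^ (lamc i + 1)},
      x * tl ∈
        (Submodule.span K {z : A |
            ∃ p ∈ Algebra.adjoin K (Set.range fun i : I => θ (Sum.inl i)),
              ∃ q ∈ Algebra.adjoin K (Set.range fun i : I => θ (Sum.inl i)),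
                z = p * tl * q}) ⊓
        (Submodule.span K {z : A | ∃ w : A, ∃ i : I, z = w * θ (Sum.inl i)})) :=
  stmt8_general θ lamc hSerre0 hSerreA2 tl htl

end
end

section
/- Let V be a ℚ(v)-vector space with a symmetric bilinear form (,) and let B be an almost orthonormal basis of V, i.e. (b,b') ∈ δ_{b,b'} + v^{-1}ℤ[[v^{-1}]] ∩ ℚ(v) for all b,b' ∈ B. Let L(V) = {x ∈ V : (x,x) ∈ A} where A = ℚ[[v^{-1}]] ∩ ℚ(v). Then L(V) is an A-submodule of V, and B is an A-basis of L(V). Moreover, if x lies in the ℤ[v,v^{-1}]-span of B and (x,x) ∈ 1 + v^{-1}A, then there exists b ∈ B with x ≡ ±b mod v^{-1}L(V). -/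
/-!
STATEMENT 11 (Lusztig 14.2.2): Let V be a ℚ(v)-vector space with a symmetric
bilinear form and B an almost orthonormal basis:
(b,b') ∈ δ_{b,b'} + v⁻¹ℤ[[v⁻¹]] ∩ ℚ(v).  Let A = ℚ[[v⁻¹]] ∩ ℚ(v) and
L(V) = {x | (x,x) ∈ A}.  Then L(V) is an A-submodule of V with A-basis B, and
if x lies in the ℤ[v,v⁻¹]-span of B with (x,x) ∈ 1 + v⁻¹A, then
x ≡ ±b mod v⁻¹L(V) for some b ∈ B.

Membership in A (resp. v⁻¹ℤ[[v⁻¹]] ∩ ℚ(v)) is expressed via the expansion at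
v = ∞ using a ring endomorphism σ with σ v = v⁻¹ and the Laurent expansion at 0.
-/

open scoped BigOperators

noncomputable section

/-- `f ∈ A = ℚ[[v⁻¹]] ∩ ℚ(v)`. -/
def memA (σ : K →+* K) (f : K) : Prop :=
  ∀ n : ℤ, n < 0 → ((σ f : LaurentSeries ℚ)).coeff n = 0

/-- `f ∈ v⁻¹ℤ[[v⁻¹]] ∩ ℚ(v)`. -/
def memZvinv (σ : K →+* K) (f : K) : Prop :=
  (∀ n : ℤ, n ≤ 0 → ((σ f : LaurentSeries ℚ)).coeff n = 0) ∧
  (∀ n : ℤ, ∃ m : ℤ, ((σ f : LaurentSeries ℚ)).coeff n = (m : ℚ))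

/-- `f ∈ ℤ[v, v⁻¹]`. -/
def isLaurentInt (f : K) : Prop :=
  ∃ g : ℤ →₀ ℤ, f = g.sum fun k a => (a : K) * v ^ k

/-!
Expand everything in powers of `v⁻¹`. If every coordinate `cᵢ` of `x` in the basis `B` has
expansion starting in order `≥ N`, almost orthonormality shows that the coefficient of order `2N`
of `(x,x)` is `∑ᵢ (cᵢ)_N ²`: the terms `cᵢ cⱼ ((bᵢ,bⱼ) - δᵢⱼ)` only start in order `2N + 1`.
Taking for `N` the least order of a coordinate makes this a nonzero sum of squares, so
`(x,x) ∈ A` forces every `cᵢ ∈ A`; the converse is clear. If moreover the `cᵢ` lie in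
`ℤ[v,v⁻¹]` and `(x,x) ∈ 1 + v⁻¹A`, the constant terms of the `cᵢ` are integers whose squares
sum to `1`, so one of them is `±1` and the others vanish.
-/

open scoped LaurentSeries

namespace HahnSeries

section

variable {Γ R : Type*} [LinearOrder Γ]

theorem le_orderTop_sum [AddCommMonoid R] {α : Type*} {s : Finset α} {x : α → R⟦Γ⟧}
    {g : WithTop Γ} (h : ∀ i ∈ s, g ≤ (x i).orderTop) : g ≤ (∑ i ∈ s, x i).orderTop := by
  refine le_orderTop_iff_forall.2 fun j hj => ?_
  rw [coeff_sum]
  exact Finset.sum_eq_zero fun i hi => coeff_eq_zero_of_lt_orderTop (hj.trans_le (h i hi))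

variable [AddCommMonoid Γ] [IsOrderedCancelAddMonoid Γ] [NonUnitalNonAssocSemiring R]

theorem coeff_mul_of_le_orderTop {x y : R⟦Γ⟧} {a b : Γ}
    (ha : a ≤ x.orderTop) (hb : b ≤ y.orderTop) :
    (x * y).coeff (a + b) = x.coeff a * y.coeff b := by
  rcases ha.lt_or_eq with ha | ha
  · rw [coeff_eq_zero_of_lt_orderTop ha, zero_mul]
    refine coeff_eq_zero_of_lt_orderTop (lt_of_lt_of_le ?_ orderTop_add_le_mul)
    rw [WithTop.coe_add]
    exact WithTop.add_lt_add_of_lt_of_le WithTop.coe_ne_top ha hb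
  rcases hb.lt_or_eq with hb | hb
  · rw [coeff_eq_zero_of_lt_orderTop hb, mul_zero]
    refine coeff_eq_zero_of_lt_orderTop (lt_of_lt_of_le ?_ orderTop_add_le_mul)
    rw [WithTop.coe_add, ← ha]
    exact WithTop.add_lt_add_of_le_of_lt WithTop.coe_ne_top le_rfl hb
  have hx : x ≠ 0 := by rintro rfl; simp at ha
  have hy : y ≠ 0 := by rintro rfl; simp at hb
  rw [← WithTop.coe_injective ((order_eq_orderTop_of_ne_zero hx).trans ha.symm),
    ← WithTop.coe_injective ((order_eq_orderTop_of_ne_zero hy).trans hb.symm),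
    coeff_mul_order_add_order, leadingCoeff_eq, leadingCoeff_eq]

end

end HahnSeries

theorem Module.Basis.eq_finsuppSum_iff_repr_eq {ι R M : Type*} [Semiring R] [AddCommMonoid M]
    [Module R M] (b : Module.Basis ι R M) (x : M) (c : ι →₀ R) :
    (x = c.sum fun i a => a • b i) ↔ b.repr x = c := by
  rw [← Finsupp.linearCombination_apply]
  constructor
  · rintro rfl
    exact b.repr_linearCombination c
  · rintro rfl
    exact (b.linearCombination_repr x).symm

section AlmostOrthonormal

open HahnSeries

variable {k ι V : Type*} [CommRing k] [AddCommGroup V] [Module k V] [DecidableEq ι]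
  {b : Module.Basis ι k V} {B : V →ₗ[k] V →ₗ[k] k}

theorem apply_self_eq_sum_sq_add (x : V) :
    B x x = ∑ i ∈ (b.repr x).support, b.repr x i ^ 2 +
      ∑ i ∈ (b.repr x).support, ∑ j ∈ (b.repr x).support,
        b.repr x i * b.repr x j * (B (b i) (b j) - if i = j then 1 else 0) := by
  conv_lhs => rw [← LinearMap.sum_repr_mul_repr_mul b b x x]
  simp [Finsupp.sum, mul_sub, Finset.sum_sub_distrib, Finset.sum_ite_eq, sq, mul_assoc]

variable {F : Type*} [Field F] {φ : k →+* F⸨X⸩}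
  (hB : ∀ i j, 1 ≤ (φ (B (b i) (b j) - if i = j then 1 else 0)).orderTop)
include hB

theorem coeff_apply_self_eq_sum_sq {x : V} {N : ℤ} (hN : ∀ i, N ≤ (φ (b.repr x i)).orderTop) :
    (φ (B x x)).coeff (N + N) = ∑ i ∈ (b.repr x).support, (φ (b.repr x i)).coeff N ^ 2 := by
  have hcross : ((N + N : ℤ) : WithTop ℤ) < (φ (∑ i ∈ (b.repr x).support, ∑ j ∈ (b.repr x).support,
      b.repr x i * b.repr x j * (B (b i) (b j) - if i = j then 1 else 0))).orderTop := by
    refine lt_of_lt_of_le (WithTop.coe_lt_coe.2 (lt_add_one (N + N))) ?_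
    rw [map_sum]
    refine le_orderTop_sum fun i _ => ?_
    rw [map_sum]
    refine le_orderTop_sum fun j _ => ?_
    rw [map_mul, map_mul]
    calc ((N + N + 1 : ℤ) : WithTop ℤ)
        ≤ (φ (b.repr x i)).orderTop + (φ (b.repr x j)).orderTop + (φ _).orderTop := by
          push_cast
          exact add_le_add (add_le_add (hN i) (hN j)) (hB i j)
      _ ≤ _ := orderTop_add_le_mul.trans' (add_le_add orderTop_add_le_mul le_rfl)
  rw [apply_self_eq_sum_sq_add (b := b) (B := B), map_add, coeff_add,
    coeff_eq_zero_of_lt_orderTop hcross, add_zero, map_sum, coeff_sum]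
  refine Finset.sum_congr rfl fun i _ => ?_
  rw [map_pow, sq, sq, coeff_mul_of_le_orderTop (hN i) (hN i)]

theorem zero_le_orderTop_apply_self_iff [LinearOrder F] [IsStrictOrderedRing F] (x : V) :
    0 ≤ (φ (B x x)).orderTop ↔ ∀ i, 0 ≤ (φ (b.repr x i)).orderTop := by
  constructor
  · intro hxx
    by_contra! hneg
    obtain ⟨i₀, hi₀⟩ := hneg
    have hi₀s : i₀ ∈ (b.repr x).support := by
      by_contra h
      simp [Finsupp.notMem_support_iff.1 h] at hi₀
    -- a coordinate of least order `N < 0` makes the coefficient of order `N + N` positive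
    obtain ⟨i₁, hi₁s, hmin⟩ :=
      (b.repr x).support.exists_min_image (fun i => (φ (b.repr x i)).orderTop) ⟨i₀, hi₀s⟩
    have hi₁ : φ (b.repr x i₁) ≠ 0 := by
      rintro h
      simpa [h] using (hmin i₀ hi₀s).trans_lt hi₀
    set N := (φ (b.repr x i₁)).order
    have hN : ∀ i, (N : WithTop ℤ) ≤ (φ (b.repr x i)).orderTop := by
      intro i
      rw [order_eq_orderTop_of_ne_zero hi₁]
      by_cases hi : i ∈ (b.repr x).support
      · exact hmin i hi
      · simp [Finsupp.notMem_support_iff.1 hi]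
    have hNneg : N < 0 := by
      have := (hmin i₀ hi₀s).trans_lt hi₀
      rw [← order_eq_orderTop_of_ne_zero hi₁] at this
      exact_mod_cast this
    have hlead : (φ (b.repr x i₁)).coeff N ≠ 0 := by
      rw [← leadingCoeff_eq]; exact leadingCoeff_ne_zero.2 hi₁
    have hpos : 0 < ∑ i ∈ (b.repr x).support, (φ (b.repr x i)).coeff N ^ 2 :=
      Finset.sum_pos' (fun i _ => sq_nonneg _) ⟨i₁, hi₁s, sq_pos_of_ne_zero hlead⟩
    rw [← coeff_apply_self_eq_sum_sq hB hN,
      coeff_eq_zero_of_lt_orderTop ((WithTop.coe_lt_coe.2 (by omega)).trans_le hxx)] at hpos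
    exact lt_irrefl 0 hpos
  · intro hc
    rw [apply_self_eq_sum_sq_add (b := b) (B := B), map_add, map_sum, map_sum]
    refine min_orderTop_le_orderTop_add.trans' (le_min ?_ ?_)
    · refine le_orderTop_sum fun i _ => ?_
      rw [map_pow, sq]
      exact orderTop_add_le_mul.trans' (add_nonneg (hc i) (hc i))
    · refine le_orderTop_sum fun i _ => ?_
      rw [map_sum]
      refine le_orderTop_sum fun j _ => ?_
      rw [map_mul, map_mul]
      refine orderTop_add_le_mul.trans' (add_nonneg ?_ (zero_le_one.trans (hB i j)))
      exact orderTop_add_le_mul.trans' (add_nonneg (hc i) (hc j))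

end AlmostOrthonormal

theorem Int.exists_sq_eq_one_of_sum_sq_eq_one {α : Type*} {s : Finset α} {m : α → ℤ}
    (h : ∑ i ∈ s, m i ^ 2 = 1) : ∃ i ∈ s, m i ^ 2 = 1 ∧ ∀ j ∈ s, j ≠ i → m j = 0 := by
  classical
  obtain ⟨i, hi, hmi⟩ : ∃ i ∈ s, m i ≠ 0 := by
    by_contra! hall
    have hzero : ∑ i ∈ s, m i ^ 2 = 0 := Finset.sum_eq_zero fun i hi => by simp [hall i hi]
    omega
  have hsplit := Finset.add_sum_erase s (fun i => m i ^ 2) hi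
  have hrest : 0 ≤ ∑ j ∈ s.erase i, m j ^ 2 := Finset.sum_nonneg fun j _ => sq_nonneg (m j)
  have hmi2 : 1 ≤ m i ^ 2 := by have := sq_pos_of_ne_zero hmi; omega
  refine ⟨i, hi, by omega, fun j hj hji => pow_eq_zero_iff (n := 2) two_ne_zero |>.1 ?_⟩
  exact (Finset.sum_eq_zero_iff_of_nonneg fun j _ => sq_nonneg (m j)).1 (by omega) j
    (Finset.mem_erase.2 ⟨hji, hj⟩)

open scoped RatFunc
open HahnSeries

def laurentAtInfty (σ : K →+* K) : K →+* ℚ⸨X⸩ := (algebraMap K ℚ⸨X⸩).comp σ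

section Expansion

variable {σ : K →+* K}

theorem memA_iff_zero_le_orderTop {f : K} : memA σ f ↔ 0 ≤ (laurentAtInfty σ f).orderTop := by
  rw [le_orderTop_iff_forall]
  exact forall_congr' fun n => by rw [← WithTop.coe_zero, WithTop.coe_lt_coe]; rfl

theorem one_le_orderTop_of_memZvinv {f : K} (h : memZvinv σ f) :
    1 ≤ (laurentAtInfty σ f).orderTop :=
  le_orderTop_iff_forall.2 fun n hn => h.1 n (by
    have : n < 1 := by exact_mod_cast hn
    omega)

theorem laurentAtInfty_intCast (m : ℤ) : laurentAtInfty σ m = single 0 (m : ℚ) := by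
  rw [map_intCast, ← map_intCast (C : ℚ →+* ℚ⸨X⸩), C_apply]

theorem memA_add {f g : K} (hf : memA σ f) (hg : memA σ g) : memA σ (f + g) := by
  rw [memA_iff_zero_le_orderTop, map_add] at *
  exact min_orderTop_le_orderTop_add.trans' (le_min hf hg)

theorem memA_mul {f g : K} (hf : memA σ f) (hg : memA σ g) : memA σ (f * g) := by
  rw [memA_iff_zero_le_orderTop, map_mul] at *
  exact orderTop_add_le_mul.trans' (add_nonneg hf hg)

variable (hσ : σ v = v⁻¹)
include hσ

theorem laurentAtInfty_v : laurentAtInfty σ v = single (-1) 1 := by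
  rw [laurentAtInfty, RingHom.comp_apply, hσ, map_inv₀]
  simp [v, inv_single]

theorem laurentAtInfty_zpow_v (k : ℤ) : laurentAtInfty σ (v ^ k) = single (-k) 1 := by
  rw [map_zpow₀, laurentAtInfty_v hσ, RatFunc.single_zpow (-1), RatFunc.single_zpow (-k),
    ← zpow_mul, neg_one_mul]

theorem coeff_laurentAtInfty_laurentInt (g : ℤ →₀ ℤ) (n : ℤ) :
    (laurentAtInfty σ (g.sum fun k a => (a : K) * v ^ k)).coeff n = g (-n) := by
  have hterm (k a : ℤ) : laurentAtInfty σ ((a : K) * v ^ k) = single (-k) (a : ℚ) := by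
    rw [map_mul, laurentAtInfty_intCast, laurentAtInfty_zpow_v hσ, single_mul_single, zero_add,
      mul_one]
  rw [map_finsuppSum]
  simp only [hterm, Finsupp.sum, coeff_sum, coeff_single, Int.eq_neg_comm,
    Finset.sum_ite_eq', Finsupp.mem_support_iff, ite_not]
  split_ifs with h <;> simp [h]

theorem memA_v_mul_iff {f : K} : memA σ (v * f) ↔ 1 ≤ (laurentAtInfty σ f).orderTop := by
  rw [memA_iff_zero_le_orderTop, map_mul, laurentAtInfty_v hσ, orderTop_mul,
    orderTop_single one_ne_zero]
  cases (laurentAtInfty σ f).orderTop using WithTop.recTopCoe with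
  | top => simp
  | coe a =>
    rw [← WithTop.coe_add, ← WithTop.coe_zero, ← WithTop.coe_one, WithTop.coe_le_coe,
      WithTop.coe_le_coe]
    omega

end Expansion

section AlmostOrthonormalBasis

variable {ι V : Type*} [DecidableEq ι] [AddCommGroup V] [Module K V] {σ : K →+* K}
  {b : Module.Basis ι K V} {B : V →ₗ[K] V →ₗ[K] K}
  (hao : ∀ i j : ι, memZvinv σ (B (b i) (b j) - if i = j then 1 else 0))
include hao

theorem memA_apply_self_iff (x : V) : memA σ (B x x) ↔ ∀ i, memA σ (b.repr x i) := by
  simp only [memA_iff_zero_le_orderTop]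
  exact zero_le_orderTop_apply_self_iff (fun i j => one_le_orderTop_of_memZvinv (hao i j)) x

theorem exists_sign_memA_v_mul_repr_sub (hσ : σ v = v⁻¹) {x : V}
    (hx : ∀ i, isLaurentInt (b.repr x i)) (hxx : memA σ (v * (B x x - 1))) :
    ∃ (i : ι) (ε : ℤ), (ε = 1 ∨ ε = -1) ∧
      ∀ j, memA σ (v * (b.repr x - Finsupp.single i (ε : K)) j) := by
  have hB i j := one_le_orderTop_of_memZvinv (hao i j)
  have hxx' : 1 ≤ (laurentAtInfty σ (B x x - 1)).orderTop := (memA_v_mul_iff hσ).1 hxx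
  have hsplit : laurentAtInfty σ (B x x) = laurentAtInfty σ (B x x - 1) + 1 := by
    rw [map_sub, map_one, sub_add_cancel]
  have hcoeff : (laurentAtInfty σ (B x x)).coeff 0 = 1 := by
    rw [hsplit, coeff_add, coeff_eq_zero_of_lt_orderTop (zero_lt_one.trans_le hxx'), coeff_one,
      if_pos rfl, zero_add]
  have hc : ∀ i, 0 ≤ (laurentAtInfty σ (b.repr x i)).orderTop := by
    refine (zero_le_orderTop_apply_self_iff hB x).1 ?_
    rw [hsplit]
    refine min_orderTop_le_orderTop_add.trans' (le_min (zero_le_one.trans hxx') ?_)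
    rw [orderTop_one]
  choose g hg using hx
  have hm i : (laurentAtInfty σ (b.repr x i)).coeff 0 = g i 0 := by
    rw [hg i, coeff_laurentAtInfty_laurentInt hσ, neg_zero]
  have hsum : ∑ i ∈ (b.repr x).support, g i 0 ^ 2 = 1 := by
    have := coeff_apply_self_eq_sum_sq hB (N := 0) hc
    simp only [add_zero, hcoeff, hm] at this
    exact_mod_cast this.symm
  obtain ⟨i, -, hi, hj⟩ := Int.exists_sq_eq_one_of_sum_sq_eq_one hsum
  refine ⟨i, g i 0, sq_eq_one_iff.1 hi, fun j => (memA_v_mul_iff hσ).2 ?_⟩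
  refine le_orderTop_iff_forall.2 fun n hn => ?_
  rw [Finsupp.sub_apply, map_sub, coeff_sub, Finsupp.single_apply]
  obtain hn | rfl : n < 0 ∨ n = 0 := by
    have : n < 1 := by exact_mod_cast hn
    omega
  · have hn' : (n : WithTop ℤ) < 0 := by exact_mod_cast hn
    rw [coeff_eq_zero_of_lt_orderTop (hn'.trans_le (hc j))]
    split_ifs
    · rw [laurentAtInfty_intCast, coeff_single_of_ne hn.ne, sub_zero]
    · rw [map_zero, coeff_zero, sub_zero]
  split_ifs with hij
  · rw [← hij, hm, laurentAtInfty_intCast, coeff_single_same, sub_self]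
  rw [map_zero, coeff_zero, sub_zero]
  by_cases hjs : j ∈ (b.repr x).support
  · rw [hm, hj j hjs (Ne.symm hij), Int.cast_zero]
  · rw [Finsupp.notMem_support_iff.1 hjs, map_zero, coeff_zero]

end AlmostOrthonormalBasis

theorem stmt11_general {ι V : Type*} [DecidableEq ι] [AddCommGroup V] [Module K V]
    (σ : K →+* K) (hσ : σ v = v⁻¹)
    (b : Module.Basis ι K V) (B : V →ₗ[K] V →ₗ[K] K)
    (hao : ∀ i j : ι, memZvinv σ (B (b i) (b j) - if i = j then 1 else 0)) :
    -- (a) L(V) is an A-submodule of V ...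
    (∀ x y : V, memA σ (B x x) → memA σ (B y y) → memA σ (B (x + y) (x + y))) ∧
    (∀ (a : K) (x : V), memA σ a → memA σ (B x x) → memA σ (B (a • x) (a • x))) ∧
    -- ... with A-basis B: L(V) is exactly the set of A-linear combinations of B
    (∀ x : V, memA σ (B x x) ↔
      ∃ c : ι →₀ K, (∀ i, memA σ (c i)) ∧ x = c.sum fun i a => a • b i) ∧
    -- (b) the ±b congruence
    (∀ x : V,
      (∃ d : ι →₀ K, (∀ i, isLaurentInt (d i)) ∧ x = d.sum fun i a => a • b i) →
      memA σ (v * (B x x - 1)) →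
      ∃ (i : ι) (ε : ℤ), (ε = 1 ∨ ε = -1) ∧
        ∃ c : ι →₀ K, (∀ j, memA σ (v * c j)) ∧
          x - (ε : K) • b i = c.sum fun j a => a • b j) := by
  have hL := memA_apply_self_iff hao
  refine ⟨fun x y hx hy => ?_, fun a x ha hx => ?_, fun x => ?_, ?_⟩
  · rw [hL] at hx hy ⊢
    simpa using fun i => memA_add (hx i) (hy i)
  · rw [hL] at hx ⊢
    simpa using fun i => memA_mul ha (hx i)
  · simp only [b.eq_finsuppSum_iff_repr_eq, hL, exists_eq_right']
  · rintro x ⟨d, hd, hxd⟩ hxx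
    rw [b.eq_finsuppSum_iff_repr_eq] at hxd
    subst hxd
    obtain ⟨i, ε, hε, hc⟩ := exists_sign_memA_v_mul_repr_sub hao hσ hd hxx
    refine ⟨i, ε, hε, _, hc, (b.eq_finsuppSum_iff_repr_eq _ _).2 ?_⟩
    rw [map_sub, map_smul, b.repr_self, Finsupp.smul_single, smul_eq_mul, mul_one]

theorem stmt11 {ι V : Type*} [DecidableEq ι] [AddCommGroup V] [Module K V]
    (σ : K →+* K) (hσ : σ v = v⁻¹)
    (b : Module.Basis ι K V) (B : V →ₗ[K] V →ₗ[K] K)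
    (hsymm : ∀ x y : V, B x y = B y x)
    (hao : ∀ i j : ι, memZvinv σ (B (b i) (b j) - if i = j then 1 else 0)) :
    -- (a) L(V) is an A-submodule of V ...
    (∀ x y : V, memA σ (B x x) → memA σ (B y y) → memA σ (B (x + y) (x + y))) ∧
    (∀ (a : K) (x : V), memA σ a → memA σ (B x x) → memA σ (B (a • x) (a • x))) ∧
    -- ... with A-basis B: L(V) is exactly the set of A-linear combinations of B
    (∀ x : V, memA σ (B x x) ↔
      ∃ c : ι →₀ K, (∀ i, memA σ (c i)) ∧ x = c.sum fun i a => a • b i) ∧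
    -- (b) the ±b congruence
    (∀ x : V,
      (∃ d : ι →₀ K, (∀ i, isLaurentInt (d i)) ∧ x = d.sum fun i a => a • b i) →
      memA σ (v * (B x x - 1)) →
      ∃ (i : ι) (ε : ℤ), (ε = 1 ∨ ε = -1) ∧
        ∃ c : ι →₀ K, (∀ j, memA σ (v * c j)) ∧
          x - (ε : K) • b i = c.sum fun j a => a • b j) :=
  stmt11_general σ hσ b B hao
end
end
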